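/- arXiv:1606.05127 — 3 statements merged into one kernel-verified Lean document; each statement's English description precedes it below -/
import Mathlib

section
/- Let K ≥ 0, m > 0, γ̄ > 0, and let f be the Rician shadowed probability density function with mean γ̄ and shape parameters K, m. Then for every s ∈ ℝ and every z ≥ 0, the lower incomplete MGF is given in closed form by ∫_0^z e^{s x} f(x) dx = (m^m (1+K) / (γ̄ (K+m)^m)) · z · Φ₂( 1−m, m ; 2 ; (s − (1+K)/γ̄) z , (s − (1+K)m/(γ̄(K+m))) z ). -/
open MeasureTheory Real

/-- Pochhammer symbol `(a)ₙ = a (a+1) ⋯ (a+n-1)`. -/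
noncomputable def poch (a : ℝ) (n : ℕ) : ℝ := ∏ j ∈ Finset.range n, (a + j)

/-- Kummer confluent hypergeometric function `₁F₁(a;b;w)`. -/
noncomputable def kummerM (a b w : ℝ) : ℝ :=
  ∑' n : ℕ, poch a n / poch b n * w ^ n / (Nat.factorial n : ℝ)

/-- Humbert bivariate confluent hypergeometric function `Φ₂(b₁,b₂;c;x,y)`. -/
noncomputable def Phi2 (b₁ b₂ c x y : ℝ) : ℝ :=
  ∑' m : ℕ, ∑' n : ℕ,
    poch b₁ m * poch b₂ n / poch c (m + n) * x ^ m * y ^ n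
      / ((Nat.factorial m : ℝ) * (Nat.factorial n : ℝ))

/-- The Rician shadowed probability density function with mean `γ̄` and shape
parameters `K ≥ 0`, `m > 0` (the κ-μ shadowed density with `μ = 1`, `κ = K`). -/
noncomputable def ricianShadowedPDF (K m γbar : ℝ) (x : ℝ) : ℝ :=
  if x < 0 then 0 else
    (1 + K) * m ^ m / (γbar * (K + m) ^ m)
      * Real.exp (-((1 + K) * x) / γbar)
      * kummerM m 1 (K * (1 + K) * x / ((K + m) * γbar))

/-!
With `p = s - (1 + K) / γ̄` and `α = K (1 + K) / ((K + m) γ̄)` the integrand is a constant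
multiple of `e^{p x} ₁F₁(m; 1; α x)`. Its Cauchy-product series, with degree-`N` part
`H_N(p, α) x^N` (`expKummerHomPart`), is integrated termwise. On the other side, grouping the
double series of `Φ₂(1 - m, m; 2; u, u + v)` by total degree and expanding `(u + v)^j`
binomially, the Chu–Vandermonde identity for rising factorials collapses the degree-`N` part to
`H_N(u, v) / (N + 1)`, because the numerator parameters `1 - m` and `m` add up to `1`.
-/

open Finset
open scoped Nat

open Polynomial in
lemma poch_eq_eval_ascPochhammer (a : ℝ) (n : ℕ) : poch a n = (ascPochhammer ℝ n).eval a := by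
  induction n with
  | zero => simp [poch]
  | succ n ih => rw [poch, prod_range_succ, ← poch, ih, ascPochhammer_succ_eval]

open Polynomial in
lemma poch_eq_neg_one_pow_mul_smeval_descPochhammer (a : ℝ) (n : ℕ) :
    poch a n = (-1) ^ n * (descPochhammer ℤ n).smeval (-a) := by
  rw [poch_eq_eval_ascPochhammer, ← neg_neg a, ascPochhammer_eval_neg_eq_descPochhammer, neg_neg,
    ← descPochhammer_map (algebraMap ℤ ℝ), eval_map_algebraMap, aeval_eq_smeval]

lemma poch_add_eq_sum_antidiagonal (a b : ℝ) (n : ℕ) :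
    poch (a + b) n
      = ∑ ij ∈ antidiagonal n, (n.choose ij.1 : ℝ) * (poch a ij.1 * poch b ij.2) := by
  rw [poch_eq_neg_one_pow_mul_smeval_descPochhammer, neg_add,
    Ring.descPochhammer_smeval_add _ (Commute.all _ _), mul_sum]
  refine sum_congr rfl fun ij hij => ?_
  rw [poch_eq_neg_one_pow_mul_smeval_descPochhammer, poch_eq_neg_one_pow_mul_smeval_descPochhammer,
    ← mem_antidiagonal.mp hij, pow_add]
  ring

lemma poch_add_div_factorial (a b : ℝ) (n : ℕ) :
    poch (a + b) n / n !
      = ∑ ij ∈ antidiagonal n, poch a ij.1 / ij.1 ! * (poch b ij.2 / ij.2 !) := by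
  rw [poch_add_eq_sum_antidiagonal, sum_div]
  refine sum_congr rfl fun ij hij => ?_
  rw [← mem_antidiagonal.mp hij, Nat.cast_add_choose]
  field_simp

lemma poch_add_right (a : ℝ) (m n : ℕ) : poch a (m + n) = poch a m * poch (a + m) n := by
  simp only [poch, prod_range_add, Nat.cast_add, add_assoc]

lemma factorial_mul_poch_natCast_add_one (r n : ℕ) : (r ! : ℝ) * poch (r + 1) n = (r + n)! := by
  rw [poch_eq_eval_ascPochhammer, factorial_mul_ascPochhammer]

lemma poch_one (n : ℕ) : poch 1 n = n ! := by
  simpa using factorial_mul_poch_natCast_add_one 0 n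

lemma poch_two (n : ℕ) : poch 2 n = (n + 1)! := by
  simpa [one_add_one_eq_two, add_comm 1 n] using factorial_mul_poch_natCast_add_one 1 n

lemma abs_poch_le (a : ℝ) (n : ℕ) : |poch a n| ≤ (|a| + 1) ^ n * n ! := by
  calc |poch a n| = ∏ j ∈ range n, |a + j| := abs_prod _ _
    _ ≤ ∏ j ∈ range n, (|a| + 1) * (j + 1) := by
      refine prod_le_prod (fun _ _ => abs_nonneg _) fun j _ => ?_
      have := abs_add_le a j
      rw [Nat.abs_cast] at this
      nlinarith [abs_nonneg a, (Nat.cast_nonneg j : (0 : ℝ) ≤ j)]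
    _ = (|a| + 1) ^ n * n ! := by
      rw [prod_mul_distrib, prod_const, card_range, ← prod_range_add_one_eq_factorial]
      push_cast; rfl

lemma factorial_le_poch {c : ℝ} (hc : 1 ≤ c) (n : ℕ) : (n ! : ℝ) ≤ poch c n := by
  rw [← poch_one]
  exact prod_le_prod (fun j _ => by positivity) fun j _ => by linarith

lemma Finset.Nat.sum_antidiagonal_sum_antidiagonal_snd {M : Type*} [AddCommMonoid M]
    (f : ℕ → ℕ → ℕ → M) (n : ℕ) :
    ∑ p ∈ antidiagonal n, ∑ q ∈ antidiagonal p.2, f p.1 q.1 q.2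
      = ∑ p ∈ antidiagonal n, ∑ q ∈ antidiagonal p.1, f q.1 q.2 p.2 := by
  simp only [sum_sigma']
  apply sum_nbij' (fun x => ⟨(x.1.1 + x.2.1, x.2.2), (x.1.1, x.2.1)⟩)
    (fun x => ⟨(x.2.1, x.2.2 + x.1.2), (x.2.2, x.1.2)⟩) <;> aesop (add simp add_assoc)

lemma poch_div_factorial_mul_add_pow (b x a : ℝ) (j : ℕ) :
    poch b j / j ! * (x + a) ^ j
      = ∑ tl ∈ antidiagonal j,
          poch (b + tl.2) tl.1 / tl.1 ! * x ^ tl.1 * (poch b tl.2 / tl.2 ! * a ^ tl.2) := by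
  rw [(Commute.all x a).add_pow', mul_sum]
  refine sum_congr rfl fun tl htl => ?_
  rw [← mem_antidiagonal.mp htl, add_comm tl.1, poch_add_right, nsmul_eq_mul, add_comm tl.2,
    Nat.cast_add_choose]
  field_simp

lemma sum_antidiagonal_poch_mul_pow_add (b₁ b₂ x a : ℝ) (N : ℕ) :
    ∑ ij ∈ antidiagonal N,
        poch b₁ ij.1 / ij.1 ! * (poch b₂ ij.2 / ij.2 !) * (x ^ ij.1 * (x + a) ^ ij.2)
      = ∑ kl ∈ antidiagonal N,
          poch (b₁ + b₂ + kl.2) kl.1 / kl.1 ! * x ^ kl.1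
            * (poch b₂ kl.2 / kl.2 ! * a ^ kl.2) := by
  calc _ = ∑ ij ∈ antidiagonal N, ∑ tl ∈ antidiagonal ij.2,
          poch b₁ ij.1 / ij.1 ! * x ^ ij.1 *
          (poch (b₂ + tl.2) tl.1 / tl.1 ! * x ^ tl.1 * (poch b₂ tl.2 / tl.2 ! * a ^ tl.2)) := by
        refine sum_congr rfl fun ij _ => ?_
        rw [← mul_sum, ← poch_div_factorial_mul_add_pow]
        ring
    _ = ∑ kl ∈ antidiagonal N, (∑ it ∈ antidiagonal kl.1,
          poch b₁ it.1 / it.1 ! * (poch (b₂ + kl.2) it.2 / it.2 !)) * x ^ kl.1 *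
            (poch b₂ kl.2 / kl.2 ! * a ^ kl.2) := by
        rw [Finset.Nat.sum_antidiagonal_sum_antidiagonal_snd
          (fun i t l => poch b₁ i / i ! * x ^ i *
            (poch (b₂ + l) t / t ! * x ^ t * (poch b₂ l / l ! * a ^ l)))]
        refine sum_congr rfl fun kl _ => ?_
        rw [sum_mul, sum_mul]
        refine sum_congr rfl fun it hit => ?_
        rw [← mem_antidiagonal.mp hit, pow_add]
        ring
    _ = _ := by simp_rw [← poch_add_div_factorial, add_assoc]

noncomputable def expKummerHomPart (a u v : ℝ) (N : ℕ) : ℝ :=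
  ∑ kl ∈ antidiagonal N, u ^ kl.1 / kl.1 ! * (poch a kl.2 * v ^ kl.2 / (kl.2 ! * kl.2 !))

lemma sum_antidiagonal_phi2_one_sub (a u v : ℝ) (N : ℕ) :
    ∑ ij ∈ antidiagonal N, poch (1 - a) ij.1 * poch a ij.2 / poch 2 (ij.1 + ij.2)
        * u ^ ij.1 * (u + v) ^ ij.2 / (ij.1 ! * ij.2 !)
      = expKummerHomPart a u v N / (N + 1) := by
  have hN : ((N + 1)! : ℝ) = (N + 1) * N ! := by push_cast [Nat.factorial_succ]; ring
  calc _ = (∑ ij ∈ antidiagonal N, poch (1 - a) ij.1 / ij.1 ! * (poch a ij.2 / ij.2 !)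
          * (u ^ ij.1 * (u + v) ^ ij.2)) / (N + 1)! := by
        rw [sum_div]
        refine sum_congr rfl fun ij hij => ?_
        rw [mem_antidiagonal.mp hij, poch_two]
        ring
    _ = _ := by
      rw [sum_antidiagonal_poch_mul_pow_add, expKummerHomPart, sum_div, sum_div]
      refine sum_congr rfl fun kl hkl => ?_
      have hfac := factorial_mul_poch_natCast_add_one kl.2 kl.1
      rw [add_comm kl.2, mem_antidiagonal.mp hkl] at hfac
      have hpos : 0 < poch (kl.2 + 1) kl.1 :=
        (Nat.cast_pos.mpr kl.1.factorial_pos).trans_le (factorial_le_poch (by simp) _)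
      rw [sub_add_cancel, add_comm (1 : ℝ), hN, ← hfac]
      field_simp

lemma tsum_prod_eq_tsum_sum_antidiagonal {E : Type*} [NormedAddCommGroup E] [CompleteSpace E]
    {f : ℕ × ℕ → E} (hf : Summable f) :
    ∑' p, f p = ∑' n, ∑ kl ∈ antidiagonal n, f kl := by
  rw [← HasAntidiagonal.sigmaAntidiagonalEquivProd.tsum_eq f]
  refine (HasAntidiagonal.sigmaAntidiagonalEquivProd.summable_iff.mpr hf).tsum_sigma.trans
    (tsum_congr fun n => ?_)
  simp [tsum_fintype, sum_attach]

lemma summable_norm_poch_mul_pow_div_factorial_sq (a w : ℝ) :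
    Summable fun n : ℕ => ‖poch a n * w ^ n / (n ! * n !)‖ := by
  refine .of_nonneg_of_le (fun _ => norm_nonneg _) (fun n => ?_)
    (Real.summable_pow_div_factorial ((|a| + 1) * |w|))
  simp only [norm_div, norm_mul, norm_pow, Real.norm_eq_abs, Nat.abs_cast]
  calc |poch a n| * |w| ^ n / (n ! * n !) ≤ (|a| + 1) ^ n * n ! * |w| ^ n / (n ! * n !) := by
        gcongr; exact abs_poch_le a n
    _ = _ := by rw [mul_pow]; field_simp

lemma summable_phi2 {c : ℝ} (hc : 1 ≤ c) (b₁ b₂ x y : ℝ) :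
    Summable fun ij : ℕ × ℕ => poch b₁ ij.1 * poch b₂ ij.2 / poch c (ij.1 + ij.2)
      * x ^ ij.1 * y ^ ij.2 / (ij.1 ! * ij.2 !) := by
  have hbound : Summable fun ij : ℕ × ℕ => ((|b₁| + 1) * |x|) ^ ij.1 / ij.1 !
      * (((|b₂| + 1) * |y|) ^ ij.2 / ij.2 !) :=
    Summable.mul_of_nonneg (Real.summable_pow_div_factorial _) (Real.summable_pow_div_factorial _)
      (fun _ => by positivity) (fun _ => by positivity)
  refine .of_norm_bounded hbound fun ⟨i, j⟩ => ?_
  have hfac : (i ! * j ! : ℝ) ≤ poch c (i + j) :=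
    calc (i ! * j ! : ℝ) ≤ (i + j)! := mod_cast Nat.le_of_dvd (Nat.factorial_pos _)
          (Nat.factorial_mul_factorial_dvd_factorial_add i j)
      _ ≤ _ := factorial_le_poch hc _
  have hpos : 0 < poch c (i + j) := (by positivity : (0 : ℝ) < i ! * j !).trans_le hfac
  calc _ = |poch b₁ i| * |poch b₂ j| * |x| ^ i * |y| ^ j / (poch c (i + j) * (i ! * j !)) := by
        simp only [norm_div, norm_mul, norm_pow, Real.norm_eq_abs, abs_of_pos hpos, Nat.abs_cast]
        ring
    _ ≤ (|b₁| + 1) ^ i * i ! * ((|b₂| + 1) ^ j * j !) * |x| ^ i * |y| ^ j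
          / ((i ! * j !) * (i ! * j !)) := by
        gcongr
        · exact abs_poch_le b₁ i
        · exact abs_poch_le b₂ j
    _ = _ := by rw [mul_pow, mul_pow]; field_simp

lemma kummerM_one_eq_tsum (a w : ℝ) :
    kummerM a 1 w = ∑' n : ℕ, poch a n * w ^ n / (n ! * n !) := by
  simp only [kummerM, poch_one]
  exact tsum_congr fun n => by ring

lemma exp_mul_kummerM_one_eq_tsum (a u v : ℝ) :
    Real.exp u * kummerM a 1 v = ∑' N, expKummerHomPart a u v N := by
  rw [Real.exp_eq_exp_ℝ, ← (NormedSpace.expSeries_div_hasSum_exp u).tsum_eq,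
    kummerM_one_eq_tsum,
    tsum_mul_tsum_eq_tsum_sum_antidiagonal_of_summable_norm
      (NormedSpace.norm_expSeries_div_summable u) (summable_norm_poch_mul_pow_div_factorial_sq a v)]
  rfl

lemma summable_norm_expKummerHomPart (a u v : ℝ) :
    Summable fun N => ‖expKummerHomPart a u v N‖ :=
  summable_norm_sum_mul_antidiagonal_of_summable_norm (f := fun k => u ^ k / k !)
    (g := fun l => poch a l * v ^ l / (l ! * l !))
    (NormedSpace.norm_expSeries_div_summable u) (summable_norm_poch_mul_pow_div_factorial_sq a v)

lemma expKummerHomPart_mul_mul (a u v x : ℝ) (N : ℕ) :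
    expKummerHomPart a (u * x) (v * x) N = expKummerHomPart a u v N * x ^ N := by
  rw [expKummerHomPart, expKummerHomPart, sum_mul]
  refine sum_congr rfl fun kl hkl => ?_
  rw [← mem_antidiagonal.mp hkl, pow_add, mul_pow, mul_pow]
  ring

lemma phi2_one_sub_two_eq_tsum (a u v : ℝ) :
    Phi2 (1 - a) a 2 u (u + v) = ∑' N : ℕ, expKummerHomPart a u v N / (N + 1) := by
  have hsum := summable_phi2 one_le_two (1 - a) a u (u + v)
  rw [Phi2, ← hsum.tsum_prod' hsum.prod_factor, tsum_prod_eq_tsum_sum_antidiagonal hsum]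
  exact tsum_congr (sum_antidiagonal_phi2_one_sub a u v)

lemma hasSum_intervalIntegral_tsum_mul_pow {c : ℕ → ℝ} {z : ℝ}
    (hc : Summable fun N => ‖c N‖ * |z| ^ N) :
    HasSum (fun N => c N * (z ^ (N + 1) / (N + 1)))
      (∫ x in (0 : ℝ)..z, ∑' N, c N * x ^ N) := by
  have hbound : ∀ N, ∀ x ∈ Set.uIoc 0 z, ‖c N * x ^ N‖ ≤ ‖c N‖ * |z| ^ N := by
    intro N x hx
    have hxz : |x| ≤ |z| := by
      simpa using Set.abs_sub_left_of_mem_uIcc (Set.uIoc_subset_uIcc hx)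
    rw [norm_mul, norm_pow, Real.norm_eq_abs x]
    gcongr
  have h := intervalIntegral.hasSum_integral_of_dominated_convergence (μ := volume)
    (fun N _ => ‖c N‖ * |z| ^ N)
    (fun N => (by fun_prop : Continuous fun x : ℝ => c N * x ^ N).aestronglyMeasurable)
    (fun N => .of_forall (hbound N)) (.of_forall fun _ _ => hc) intervalIntegrable_const
    (.of_forall fun x hx => (hc.of_norm_bounded fun N => hbound N x hx).hasSum)
  refine h.congr_fun fun N => ?_
  rw [intervalIntegral.integral_const_mul, integral_pow]
  simp

lemma exp_mul_ricianShadowedPDF_of_nonneg (K m γbar s : ℝ) {x : ℝ} (hx : 0 ≤ x) :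
    Real.exp (s * x) * ricianShadowedPDF K m γbar x
      = (1 + K) * m ^ m / (γbar * (K + m) ^ m)
        * (Real.exp ((s - (1 + K) / γbar) * x)
          * kummerM m 1 (K * (1 + K) / ((K + m) * γbar) * x)) := by
  have hexp : Real.exp ((s - (1 + K) / γbar) * x)
      = Real.exp (s * x) * Real.exp (-((1 + K) * x) / γbar) := by
    rw [← Real.exp_add]
    ring_nf
  rw [ricianShadowedPDF, if_neg (not_lt.mpr hx), hexp, div_mul_eq_mul_div _ _ x]
  ring

theorem lower_IMGF_ricianShadowed_general (K m γbar : ℝ)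
    (hK : 0 ≤ K) (hm : 0 < m)
    (s z : ℝ) (hz : 0 ≤ z) :
    ∫ x in (0:ℝ)..z, Real.exp (s * x) * ricianShadowedPDF K m γbar x
      = m ^ m * (1 + K) / (γbar * (K + m) ^ m) * z
        * Phi2 (1 - m) m 2
            ((s - (1 + K) / γbar) * z)
            ((s - (1 + K) / γbar * (m / (K + m))) * z) := by
  set C := (1 + K) * m ^ m / (γbar * (K + m) ^ m)
  set p := s - (1 + K) / γbar
  set α := K * (1 + K) / ((K + m) * γbar)
  have hpα : s - (1 + K) / γbar * (m / (K + m)) = p + α := by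
    simp only [p, α]
    field_simp [(by linarith : K + m ≠ 0)]
    ring
  have hintegrand : ∀ x ∈ Set.uIcc 0 z, Real.exp (s * x) * ricianShadowedPDF K m γbar x
      = C * ∑' N, expKummerHomPart m p α N * x ^ N := fun x hx => by
    rw [exp_mul_ricianShadowedPDF_of_nonneg K m γbar s ((Set.uIcc_of_le hz ▸ hx).1),
      exp_mul_kummerM_one_eq_tsum]
    simp_rw [expKummerHomPart_mul_mul]
    rfl
  have hsummable : Summable fun N => ‖expKummerHomPart m p α N‖ * |z| ^ N := by
    simpa [expKummerHomPart_mul_mul, abs_of_nonneg hz] using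
      summable_norm_expKummerHomPart m (p * z) (α * z)
  rw [intervalIntegral.integral_congr hintegrand, intervalIntegral.integral_const_mul,
    (hasSum_intervalIntegral_tsum_mul_pow hsummable).tsum_eq.symm, hpα, add_mul,
    phi2_one_sub_two_eq_tsum, ← tsum_mul_left, ← tsum_mul_left]
  congr 1 with N
  rw [expKummerHomPart_mul_mul]
  ring

/-- closed form of the lower incomplete MGF of the Rician shadowed
distribution. -/
theorem lower_IMGF_ricianShadowed (K m γbar : ℝ)
    (hK : 0 ≤ K) (hm : 0 < m) (hγ : 0 < γbar)
    (s z : ℝ) (hz : 0 ≤ z) :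
    ∫ x in (0:ℝ)..z, Real.exp (s * x) * ricianShadowedPDF K m γbar x
      = m ^ m * (1 + K) / (γbar * (K + m) ^ m) * z
        * Phi2 (1 - m) m 2
            ((s - (1 + K) / γbar) * z)
            ((s - (1 + K) / γbar * (m / (K + m))) * z) :=
  lower_IMGF_ricianShadowed_general K m γbar hK hm s z hz
end

section
/- Let γ_b and γ_e be independent exponentially distributed random variables with means γ̄_b > 0 and γ̄_e > 0 respectively (i.e., γ_b has density (1/γ̄_b)e^{−x/γ̄_b} on [0,∞) and similarly for γ_e). Then for every R_S ≥ 0, the outage probability of secrecy capacity is P( log₂((1+γ_b)/(1+γ_e)) ≤ R_S ) = 1 − e^{−(2^{R_S}−1)/γ̄_b} · γ̄_b / (γ̄_b + 2^{R_S} γ̄_e). -/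
open MeasureTheory Real ProbabilityTheory Set

/-!
Almost surely both SNRs are nonnegative, and then the outage event is
`{γ_b ≤ t γ_e + (t - 1)}` with `t = 2^{R_S}`. By independence and Fubini its complement has
probability `E[exp (-(t γ_e + t - 1) / γ̄_b)]`, the exponential tail integrated against the law of
`γ_e`, and the Laplace transform of an exponential law gives the factor
`γ̄_b / (γ̄_b + t γ̄_e)`.
-/

lemma withDensity_exp_mean_eq_expMeasure (m : ℝ) :
    volume.withDensity (fun x => ENNReal.ofReal (if x < 0 then 0 else exp (-x / m) / m))
      = expMeasure m⁻¹ := by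
  refine congrArg _ (funext fun x => ?_)
  change _ = exponentialPDF m⁻¹ x
  rw [exponentialPDF_eq]
  rcases lt_or_ge x 0 with hx | hx
  · simp [hx, hx.not_ge]
  · simp [hx.not_gt, hx, div_eq_inv_mul]

lemma ae_nonneg_expMeasure (r : ℝ) : ∀ᵐ x ∂expMeasure r, 0 ≤ x := by
  simp only [ae_iff, not_le]
  change volume.withDensity (exponentialPDF r) (Iio 0) = 0
  rw [withDensity_apply _ measurableSet_Iio]
  exact lintegral_exponentialPDF_of_nonpos le_rfl

lemma expMeasure_Ioi {r x : ℝ} (hr : 0 < r) (hx : 0 ≤ x) :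
    expMeasure r (Ioi x) = ENNReal.ofReal (exp (-(r * x))) := by
  have := isProbabilityMeasure_expMeasure hr
  rw [← measure_cdf (expMeasure r), StieltjesFunction.measure_Ioi _ (tendsto_cdf_atTop _),
    cdf_expMeasure_eq hr, if_pos hx, sub_sub_cancel]

lemma measurable_exponentialPDF (r : ℝ) : Measurable (exponentialPDF r) :=
  (measurable_exponentialPDFReal r).ennreal_ofReal

lemma lintegral_exp_neg_mul_expMeasure {r u : ℝ} (hr : 0 < r) (hu : 0 ≤ u) :
    ∫⁻ y, ENNReal.ofReal (exp (-(u * y))) ∂expMeasure r = ENNReal.ofReal (r / (r + u)) := by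
  have hru : 0 < r + u := by positivity
  have tilt : ∀ y, exponentialPDF r y * ENNReal.ofReal (exp (-(u * y)))
      = ENNReal.ofReal (r / (r + u)) * exponentialPDF (r + u) y := by
    intro y
    rcases lt_or_ge y 0 with hy | hy
    · simp [exponentialPDF_of_neg hy]
    · have : exp (-((r + u) * y)) = exp (-(u * y)) * exp (-(r * y)) := by
        rw [← exp_add]; ring_nf
      rw [exponentialPDF_of_nonneg hy, exponentialPDF_of_nonneg hy,
        ← ENNReal.ofReal_mul (by positivity), ← ENNReal.ofReal_mul (by positivity), this]
      field_simp
  change ∫⁻ y, _ ∂volume.withDensity (exponentialPDF r) = _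
  rw [lintegral_withDensity_eq_lintegral_mul _ (measurable_exponentialPDF r) (by fun_prop)]
  simp only [Pi.mul_apply, tilt]
  rw [lintegral_const_mul _ (measurable_exponentialPDF _),
    lintegral_exponentialPDF_eq_one hru, mul_one]

lemma expMeasure_prod_real_setOf_mul_add_lt {r s t c : ℝ} (hr : 0 < r) (hs : 0 < s) (ht : 0 ≤ t)
    (hc : 0 ≤ c) :
    ((expMeasure r).prod (expMeasure s)).real {p | t * p.2 + c < p.1}
      = exp (-(r * c)) * (s / (s + r * t)) := by
  have := isProbabilityMeasure_expMeasure hr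
  have := isProbabilityMeasure_expMeasure hs
  have slice : ∀ᵐ y ∂expMeasure s, expMeasure r ((fun x => (x, y)) ⁻¹' {p | t * p.2 + c < p.1})
      = ENNReal.ofReal (exp (-(r * c))) * ENNReal.ofReal (exp (-(r * t * y))) := by
    filter_upwards [ae_nonneg_expMeasure s] with y hy
    change expMeasure r (Ioi (t * y + c)) = _
    rw [expMeasure_Ioi hr (by positivity), ← ENNReal.ofReal_mul (exp_pos _).le, ← exp_add]
    ring_nf
  rw [measureReal_def, Measure.prod_apply_symm (measurableSet_lt (by fun_prop) (by fun_prop)),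
    lintegral_congr_ae slice, lintegral_const_mul _ (by fun_prop),
    lintegral_exp_neg_mul_expMeasure hs (by positivity), ← ENNReal.ofReal_mul (exp_pos _).le,
    ENNReal.toReal_ofReal (by positivity)]

lemma ProbabilityTheory.IndepFun.measureReal_preimage_prodMk {Ω α β : Type*} [MeasurableSpace Ω]
    [MeasurableSpace α] [MeasurableSpace β] {P : Measure Ω} [IsFiniteMeasure P]
    {X : Ω → α} {Y : Ω → β} (hXY : IndepFun X Y P) (hX : Measurable X) (hY : Measurable Y)
    {S : Set (α × β)} (hS : MeasurableSet S) :
    P.real ((fun ω => (X ω, Y ω)) ⁻¹' S) = ((P.map X).prod (P.map Y)).real S := by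
  rw [← map_measureReal_apply (hX.prodMk hY) hS,
    (indepFun_iff_map_prod_eq_prod_map_map hX.aemeasurable hY.aemeasurable).mp hXY]

/-- classical Rayleigh/Rayleigh secrecy outage formula. If `γb`
and `γe` are independent exponential random variables with means `γ̄_b` and
`γ̄_e`, then
`P(C_S ≤ R_S) = 1 - e^{-(2^{R_S}-1)/γ̄_b} · γ̄_b/(γ̄_b + 2^{R_S} γ̄_e)`. -/
theorem secrecy_outage_rayleigh_rayleigh {Ω : Type*} [MeasurableSpace Ω]
    (P : Measure Ω) [IsProbabilityMeasure P]
    (γb γe : Ω → ℝ)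
    (hγb : Measurable γb) (hγe : Measurable γe)
    (γbbar γebar : ℝ) (hγbbar : 0 < γbbar) (hγebar : 0 < γebar)
    (hfb : Measure.map γb P = volume.withDensity fun x =>
      ENNReal.ofReal (if x < 0 then 0 else Real.exp (-x / γbbar) / γbbar))
    (hfe : Measure.map γe P = volume.withDensity fun x =>
      ENNReal.ofReal (if x < 0 then 0 else Real.exp (-x / γebar) / γebar))
    (hindep : IndepFun γb γe P)
    (RS : ℝ) (hRS : 0 ≤ RS) :
    (P {ω | Real.logb 2 ((1 + γb ω) / (1 + γe ω)) ≤ RS}).toReal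
      = 1 - Real.exp (-((2:ℝ) ^ RS - 1) / γbbar)
            * γbbar / (γbbar + (2:ℝ) ^ RS * γebar) := by
  set t : ℝ := (2:ℝ) ^ RS
  have ht : 1 ≤ t := one_le_rpow one_le_two hRS
  rw [withDensity_exp_mean_eq_expMeasure] at hfb hfe
  have hb0 : ∀ᵐ ω ∂P, 0 ≤ γb ω := ae_of_ae_map hγb.aemeasurable (hfb ▸ ae_nonneg_expMeasure _)
  have he0 : ∀ᵐ ω ∂P, 0 ≤ γe ω := ae_of_ae_map hγe.aemeasurable (hfe ▸ ae_nonneg_expMeasure _)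
  let S : Set (ℝ × ℝ) := {p | t * p.2 + (t - 1) < p.1}
  have outage_eq : {ω | logb 2 ((1 + γb ω) / (1 + γe ω)) ≤ RS}
      =ᵐ[P] (((fun ω => (γb ω, γe ω)) ⁻¹' S)ᶜ : Set Ω) := by
    filter_upwards [hb0, he0] with ω hb he
    rw [eq_iff_iff]
    change _ ≤ RS ↔ ¬ t * γe ω + (t - 1) < γb ω
    rw [logb_le_iff_le_rpow one_lt_two (by positivity), div_le_iff₀ (by positivity), not_lt]
    constructor <;> intro h <;> linarith
  have hS : MeasurableSet S := measurableSet_lt (by fun_prop) (by fun_prop)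
  calc (P {ω | logb 2 ((1 + γb ω) / (1 + γe ω)) ≤ RS}).toReal
      = 1 - P.real ((fun ω => (γb ω, γe ω)) ⁻¹' S) := by
        rw [← measureReal_def, measureReal_congr outage_eq,
          probReal_compl_eq_one_sub (hS.preimage (hγb.prodMk hγe))]
    _ = 1 - exp (-(γbbar⁻¹ * (t - 1))) * (γebar⁻¹ / (γebar⁻¹ + γbbar⁻¹ * t)) := by
        rw [hindep.measureReal_preimage_prodMk hγb hγe hS, hfb, hfe,
          expMeasure_prod_real_setOf_mul_add_lt (by positivity) (by positivity) (by positivity)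
            (by linarith)]
    _ = _ := by
        field_simp
end

section
/- Let μ and m be positive integers with μ ≤ m, let κ > 0 and γ̄ > 0, and let f be the κ-μ shadowed probability density function with mean γ̄ and shape parameters κ, μ, m. Then the CDF of the κ-μ shadowed distribution is a finite mixture of Erlang (squared Nakagami) CDFs: for every γ ≥ 0, ∫_0^γ f(x) dx = 1 − Σ_{i=0}^{m−μ} binom(m−μ, i) (m/(μκ+m))^i (μκ/(μκ+m))^{m−μ−i} e^{−γ/Ω} Σ_{r=0}^{m−i−1} (γ/Ω)^r / r!, where Ω = (μκ+m) γ̄ / (m μ (1+κ)). -/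
/-!
For an integer `d = m - μ` the Kummer function is elementary,
`₁F₁(μ + d; μ; w) = e^w ∑_{i ≤ d} C(d,i) w^i / (μ)_i`; on coefficients this is the identity
`(μ + d)_n = ∑_i C(d,i) n(n-1)⋯(n-i+1) (μ + i)_{n-i}`.
With `θ = μ(1+κ)/γ̄`, `p = m/(μκ+m)` and `q = μκ/(μκ+m) = 1 - p`, the κ-μ shadowed
density is `p^m` times a Gamma(μ, θ) density times `₁F₁(m; μ; θ q x)`. The factor `e^{θ q x}`
turns the rate `θ` into `θ p = 1/Ω`, and `(θ q x)^i / (μ)_i` raises the shape by `i`, so the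
density is the binomial mixture `∑_i C(d,i) q^i p^{d-i} Gamma(μ + i, 1/Ω)`. For integer `μ`
these are Erlang densities, whose CDF at `γ` is `1 - e^{-y} ∑_{r < μ+i} y^r / r!`, `y = γ/Ω`.
-/

open MeasureTheory Real

/-- The κ-μ shadowed probability density function with mean `γ̄` and shape
parameters `κ ≥ 0`, `μ > 0`, `m > 0`. -/
noncomputable def kappaMuShadowedPDF (κ μ m γbar : ℝ) (x : ℝ) : ℝ :=
  if x < 0 then 0 else
    μ ^ μ * m ^ m * (1 + κ) ^ μ / (Real.Gamma μ * γbar ^ μ * (μ * κ + m) ^ m)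
      * x ^ (μ - 1) * Real.exp (-(μ * (1 + κ) * x) / γbar)
      * kummerM m μ (μ ^ 2 * κ * (1 + κ) * x / ((μ * κ + m) * γbar))

open Finset ProbabilityTheory

lemma poch_succ (a : ℝ) (n : ℕ) : poch a (n + 1) = poch a n * (a + n) :=
  prod_range_succ _ n

lemma poch_succ' (a : ℝ) (n : ℕ) : poch a (n + 1) = a * poch (a + 1) n := by
  simp only [poch, prod_range_succ', Nat.cast_succ, Nat.cast_zero, add_zero, mul_comm _ a,
    add_assoc, add_comm (1 : ℝ)]

lemma poch_pos {a : ℝ} (ha : 0 < a) (n : ℕ) : 0 < poch a n :=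
  prod_pos fun _ _ => by positivity

lemma poch_add (a : ℝ) (i j : ℕ) : poch a (i + j) = poch a i * poch (a + i) j := by
  simp only [poch, prod_range_add, Nat.cast_add, add_assoc]

lemma poch_add_natCast_eq_sum (d : ℕ) (a : ℝ) (n : ℕ) :
    poch (a + d) n = ∑ i ∈ range (d + 1),
      (d.choose i : ℝ) * (n.descFactorial i * poch (a + i) (n - i)) := by
  induction d generalizing a n with
  | zero => simp
  | succ d ih =>
    rcases n with _ | n
    · simp [sum_range_succ', poch]
    set g : ℕ → ℝ := fun i => (n + 1).descFactorial i * poch (a + i) (n + 1 - i)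
    calc poch (a + (d + 1 : ℕ)) (n + 1)
        = poch (a + d) (n + 1) + (n + 1) * poch (a + 1 + d) n := by
          rw [show a + ((d + 1 : ℕ) : ℝ) = a + d + 1 by push_cast; ring,
            show a + 1 + (d : ℝ) = a + d + 1 by ring, poch_succ, poch_succ' (a + d)]
          ring
      _ = ∑ i ∈ range (d + 1), (d.choose i : ℝ) * g i
            + ∑ i ∈ range (d + 1), (d.choose i : ℝ) * g (i + 1) := by
          rw [ih, ih, mul_sum]
          congr 1
          refine sum_congr rfl fun i _ => ?_
          simp only [g, Nat.succ_descFactorial_succ, Nat.add_sub_add_right, Nat.cast_mul,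
            Nat.cast_succ, add_right_comm a 1, add_assoc a]
          ring
      _ = ∑ i ∈ range (d + 1 + 1), ((d + 1).choose i : ℝ) * g i :=
          (sum_choose_succ_mul (fun i _ => g i) d).symm

lemma hasSum_descFactorial_mul_pow_div_factorial (i : ℕ) (w : ℝ) :
    HasSum (fun n : ℕ => n.descFactorial i * w ^ n / n.factorial) (w ^ i * Real.exp w) := by
  rw [← hasSum_nat_add_iff' i]
  have hlow : ∑ n ∈ range i, (n.descFactorial i : ℝ) * w ^ n / n.factorial = 0 :=
    sum_eq_zero fun n hn => by simp [Nat.descFactorial_of_lt (mem_range.1 hn)]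
  have hshift (n : ℕ) : ((n + i).descFactorial i : ℝ) * w ^ (n + i) / (n + i).factorial
      = w ^ i * (w ^ n / n.factorial) := by
    have h := Nat.factorial_mul_descFactorial (Nat.le_add_left i n)
    rw [Nat.add_sub_cancel] at h
    rw [← h]
    push_cast
    field_simp
    ring
  simp only [hlow, sub_zero, hshift]
  exact (Real.exp_eq_exp_ℝ ▸ NormedSpace.expSeries_div_hasSum_exp w).mul_left _

lemma kummerM_add_natCast {b : ℝ} (hb : 0 < b) (d : ℕ) (w : ℝ) :
    kummerM (b + d) b w
      = Real.exp w * ∑ i ∈ range (d + 1), (d.choose i : ℝ) * w ^ i / poch b i := by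
  have hcoeff (n : ℕ) : poch (b + d) n / poch b n * w ^ n / n.factorial
      = ∑ i ∈ range (d + 1),
          (d.choose i : ℝ) / poch b i * (n.descFactorial i * w ^ n / n.factorial) := by
    rw [poch_add_natCast_eq_sum, sum_div, sum_mul, sum_div]
    refine sum_congr rfl fun i _ => ?_
    rcases le_or_gt i n with hin | hin
    · obtain ⟨j, rfl⟩ := Nat.exists_eq_add_of_le hin
      have hi := (poch_pos hb i).ne'
      have hj := (poch_pos (by positivity : 0 < b + i) j).ne'
      rw [poch_add, Nat.add_sub_cancel_left]
      field_simp
    · simp [Nat.descFactorial_of_lt hin]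
  have hsum := hasSum_sum fun i (_ : i ∈ range (d + 1)) =>
    (hasSum_descFactorial_mul_pow_div_factorial i w).mul_left ((d.choose i : ℝ) / poch b i)
  rw [kummerM, funext hcoeff, hsum.tsum_eq, mul_sum]
  exact sum_congr rfl fun i _ => by ring

lemma Gamma_add_natCast_eq_mul_poch {a : ℝ} (ha : 0 < a) (i : ℕ) :
    Real.Gamma (a + i) = Real.Gamma a * poch a i := by
  induction i with
  | zero => simp [poch]
  | succ i ih =>
    rw [Nat.cast_succ, ← add_assoc, Real.Gamma_add_one (by positivity), ih, poch_succ]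
    ring

lemma gammaPDFReal_add_natCast {a r : ℝ} (ha : 0 < a) (hr : 0 ≤ r) (i : ℕ) (x : ℝ) :
    gammaPDFReal (a + i) r x = gammaPDFReal a r x * (r * x) ^ i / poch a i := by
  rcases Nat.eq_zero_or_pos i with rfl | hi
  · simp [poch]
  unfold gammaPDFReal
  split_ifs with hx
  · have hpoch := (poch_pos ha i).ne'
    have hGamma := (Real.Gamma_pos_of_pos ha).ne'
    rw [Gamma_add_natCast_eq_mul_poch ha, Real.rpow_add_natCast' hr (by positivity),
      show a + i - 1 = a - 1 + i by ring,
      Real.rpow_add_natCast' hx (ne_of_gt (by linarith [(Nat.one_le_cast (α := ℝ)).2 hi]))]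
    field_simp
    ring
  · simp

lemma gammaPDFReal_mul_rate {r p : ℝ} (hr : 0 ≤ r) (hp : 0 ≤ p) (a x : ℝ) :
    gammaPDFReal a (r * p) x = p ^ a * gammaPDFReal a r x * Real.exp (r * (1 - p) * x) := by
  unfold gammaPDFReal
  split_ifs
  · rw [Real.mul_rpow hr hp, show -(r * p * x) = -(r * x) + r * (1 - p) * x by ring,
      Real.exp_add]
    ring
  · simp

theorem rpow_mul_gammaPDFReal_mul_kummerM {a b θ p q : ℝ} (hb : 0 < b) (hθ : 0 ≤ θ) (hp : 0 ≤ p)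
    (hpq : p + q = 1) (d : ℕ) (had : a = b + d) (x : ℝ) :
    p ^ a * gammaPDFReal b θ x * kummerM a b (θ * q * x)
      = ∑ i ∈ range (d + 1),
          (d.choose i : ℝ) * q ^ i * p ^ (d - i) * gammaPDFReal (b + i) (θ * p) x := by
  subst had
  rw [kummerM_add_natCast hb, Real.rpow_add_natCast' hp (by positivity), mul_sum, mul_sum]
  refine sum_congr rfl fun i hi => ?_
  rw [gammaPDFReal_add_natCast hb (by positivity), gammaPDFReal_mul_rate hθ hp,
    show 1 - p = q by linarith, ← pow_sub_mul_pow p (Nat.le_of_lt_succ (mem_range.1 hi))]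
  ring

lemma kappaMuShadowedPDF_eq_gammaPDFReal_mul_kummerM {κ μ m γbar : ℝ} (hκ : 0 ≤ κ) (hμ : 0 ≤ μ)
    (hm : 0 ≤ m) (hγ : 0 ≤ γbar) (x : ℝ) :
    kappaMuShadowedPDF κ μ m γbar x
      = (m / (μ * κ + m)) ^ m * gammaPDFReal μ (μ * (1 + κ) / γbar) x
          * kummerM m μ (μ * (1 + κ) / γbar * (μ * κ / (μ * κ + m)) * x) := by
  have harg : μ ^ 2 * κ * (1 + κ) * x / ((μ * κ + m) * γbar)
      = μ * (1 + κ) / γbar * (μ * κ / (μ * κ + m)) * x := by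
    simp only [div_eq_mul_inv, mul_inv]
    ring
  unfold kappaMuShadowedPDF gammaPDFReal
  rw [harg]
  by_cases hx : x < 0
  · simp [hx, not_le.2 hx]
  rw [if_neg hx, if_pos (not_lt.1 hx), Real.div_rpow hm (by positivity),
    Real.div_rpow (by positivity) hγ, Real.mul_rpow hμ (by positivity)]
  ring_nf

/-- `P(X > y)` for `X` Erlang of shape `n` and rate `1`, i.e. the regularized upper incomplete
gamma function `Q(n, y)`. -/
noncomputable def erlangSurvival (n : ℕ) (y : ℝ) : ℝ :=
  Real.exp (-y) * ∑ r ∈ range n, y ^ r / r.factorial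

lemma erlangSurvival_succ (n : ℕ) (y : ℝ) :
    erlangSurvival (n + 1) y = erlangSurvival n y + Real.exp (-y) * y ^ n / n.factorial := by
  simp only [erlangSurvival, sum_range_succ]
  ring

lemma erlangSurvival_succ_zero (k : ℕ) : erlangSurvival (k + 1) 0 = 1 := by
  simp [erlangSurvival, sum_range_succ']

lemma hasDerivAt_erlangSurvival (k : ℕ) (y : ℝ) :
    HasDerivAt (erlangSurvival (k + 1)) (-(Real.exp (-y) * y ^ k / k.factorial)) y := by
  have hexp : HasDerivAt (fun y => Real.exp (-y)) (-Real.exp (-y)) y := by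
    simpa using (hasDerivAt_neg y).exp
  induction k with
  | zero =>
    convert hexp using 1
    · ext y
      simp [erlangSurvival]
    · simp
  | succ k ih =>
    have hterm : HasDerivAt (fun y => Real.exp (-y) * y ^ (k + 1) / (k + 1).factorial)
        ((-Real.exp (-y) * y ^ (k + 1) + Real.exp (-y) * ((k + 1 : ℕ) * y ^ k))
          / (k + 1).factorial) y :=
      (hexp.mul (hasDerivAt_pow (k + 1) y)).div_const _
    rw [funext (erlangSurvival_succ (k + 1))]
    refine (ih.add hterm).congr_deriv ?_
    rw [Nat.factorial_succ]
    push_cast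
    field_simp
    ring

lemma gammaPDFReal_natCast_succ_of_nonneg (k : ℕ) (r : ℝ) {x : ℝ} (hx : 0 ≤ x) :
    gammaPDFReal (k + 1 : ℕ) r x = r ^ (k + 1) * x ^ k * Real.exp (-(r * x)) / k.factorial := by
  rw [gammaPDFReal, if_pos hx, Real.rpow_natCast, Nat.cast_succ, Real.Gamma_nat_eq_factorial,
    add_sub_cancel_right, Real.rpow_natCast]
  ring

lemma intervalIntegrable_gammaPDFReal_natCast {n : ℕ} (hn : 0 < n) (r : ℝ) {γ : ℝ}
    (hγ : 0 ≤ γ) :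
    IntervalIntegrable (gammaPDFReal n r) volume 0 γ := by
  obtain ⟨k, rfl⟩ := Nat.exists_eq_add_one.2 hn
  refine ContinuousOn.intervalIntegrable (ContinuousOn.congr (f := fun x =>
    r ^ (k + 1) * x ^ k * Real.exp (-(r * x)) / k.factorial) (by fun_prop) fun x hx => ?_)
  rw [Set.uIcc_of_le hγ] at hx
  exact gammaPDFReal_natCast_succ_of_nonneg k r hx.1

lemma integral_gammaPDFReal_natCast {n : ℕ} (hn : 0 < n) (r : ℝ) {γ : ℝ} (hγ : 0 ≤ γ) :
    ∫ x in (0 : ℝ)..γ, gammaPDFReal n r x = 1 - erlangSurvival n (r * γ) := by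
  obtain ⟨k, rfl⟩ := Nat.exists_eq_add_one.2 hn
  have hF (x : ℝ) : HasDerivAt (fun t => -erlangSurvival (k + 1) (r * t))
      (r ^ (k + 1) * x ^ k * Real.exp (-(r * x)) / k.factorial) x := by
    refine (((hasDerivAt_erlangSurvival k (r * x)).comp x
      ((hasDerivAt_id x).const_mul r)).neg).congr_deriv ?_
    ring
  rw [intervalIntegral.integral_congr (g := fun x =>
      r ^ (k + 1) * x ^ k * Real.exp (-(r * x)) / k.factorial) fun x hx =>
        gammaPDFReal_natCast_succ_of_nonneg k r (Set.uIcc_of_le hγ ▸ hx).1,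
    intervalIntegral.integral_eq_sub_of_hasDerivAt (fun x _ => hF x)
      (Continuous.intervalIntegrable (by fun_prop) _ _)]
  simp [erlangSurvival_succ_zero]
  ring

lemma integral_binomial_mixture_gammaPDFReal {μ : ℕ} (hμ : 0 < μ) (d : ℕ) {p q : ℝ}
    (hpq : p + q = 1) (r : ℝ) {γ : ℝ} (hγ : 0 ≤ γ) :
    ∫ x in (0 : ℝ)..γ, ∑ i ∈ range (d + 1),
        (d.choose i : ℝ) * q ^ i * p ^ (d - i) * gammaPDFReal ((μ : ℝ) + i) r x
      = 1 - ∑ i ∈ range (d + 1),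
        (d.choose i : ℝ) * p ^ i * q ^ (d - i) * erlangSurvival (μ + d - i) (r * γ) := by
  have hcdf (i : ℕ) (c : ℝ) : ∫ x in (0 : ℝ)..γ, c * gammaPDFReal ((μ : ℝ) + i) r x
      = c * (1 - erlangSurvival (μ + i) (r * γ)) := by
    rw [intervalIntegral.integral_const_mul, ← Nat.cast_add,
      integral_gammaPDFReal_natCast (by omega) r hγ]
  have hweights : ∑ i ∈ range (d + 1), (d.choose i : ℝ) * q ^ i * p ^ (d - i) = 1 := by
    calc _ = (q + p) ^ d := by rw [add_pow]; exact sum_congr rfl fun i _ => by ring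
      _ = 1 := by rw [add_comm, hpq, one_pow]
  have hint (i : ℕ) : IntervalIntegrable (gammaPDFReal ((μ : ℝ) + i) r) volume 0 γ :=
    (Nat.cast_add (R := ℝ) μ i) ▸ intervalIntegrable_gammaPDFReal_natCast (by omega) r hγ
  rw [intervalIntegral.integral_finsetSum fun i _ => (hint i).const_mul _,
    sum_congr rfl fun i _ => hcdf i _]
  simp only [mul_sub, mul_one]
  rw [sum_sub_distrib, hweights, ← sum_range_reflect]
  congr 1
  refine sum_congr rfl fun i hi => ?_
  have hid : i ≤ d := Nat.le_of_lt_succ (mem_range.1 hi)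
  rw [add_tsub_cancel_right, Nat.choose_symm hid, Nat.sub_sub_self hid, ← Nat.add_sub_assoc hid]
  ring

theorem kappaMuShadowed_cdf_mixture_general (μ m : ℕ) (hμ : 0 < μ)
    (hμm : μ ≤ m) (κ γbar : ℝ) (hκ : 0 < κ) (hγ : 0 < γbar)
    (Ωc : ℝ) (hΩc : Ωc = ((μ : ℝ) * κ + m) * γbar / ((m : ℝ) * μ * (1 + κ)))
    (γ : ℝ) (hγ0 : 0 ≤ γ) :
    ∫ x in (0:ℝ)..γ, kappaMuShadowedPDF κ (μ : ℝ) (m : ℝ) γbar x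
      = 1 - ∑ i ∈ Finset.range (m - μ + 1),
            (Nat.choose (m - μ) i : ℝ)
              * ((m : ℝ) / ((μ : ℝ) * κ + m)) ^ i
              * ((μ : ℝ) * κ / ((μ : ℝ) * κ + m)) ^ (m - μ - i)
              * Real.exp (-γ / Ωc)
              * ∑ r ∈ Finset.range (m - i), (γ / Ωc) ^ r / (Nat.factorial r : ℝ) := by
  have hs : 0 < (μ : ℝ) * κ + m := by positivity
  have hpq : (m : ℝ) / (μ * κ + m) + μ * κ / (μ * κ + m) = 1 := by field_simp; ring
  have hmd : (m : ℝ) = μ + (m - μ : ℕ) := by rw [Nat.cast_sub hμm]; ring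
  have hpdf (x : ℝ) : kappaMuShadowedPDF κ μ m γbar x
      = ∑ i ∈ range (m - μ + 1), ((m - μ).choose i : ℝ) * (μ * κ / (μ * κ + m)) ^ i
          * (m / (μ * κ + m)) ^ (m - μ - i)
          * gammaPDFReal ((μ : ℝ) + i) (μ * (1 + κ) / γbar * (m / (μ * κ + m))) x := by
    rw [kappaMuShadowedPDF_eq_gammaPDFReal_mul_kummerM hκ.le μ.cast_nonneg m.cast_nonneg hγ.le,
      rpow_mul_gammaPDFReal_mul_kummerM (by positivity) (by positivity) (by positivity) hpq _ hmd]
  have hrate : μ * (1 + κ) / γbar * (m / (μ * κ + m)) * γ = γ / Ωc := by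
    rw [hΩc]
    field_simp
  simp only [hpdf]
  rw [integral_binomial_mixture_gammaPDFReal hμ _ hpq _ hγ0, hrate, Nat.add_sub_cancel' hμm]
  simp only [erlangSurvival, neg_div, mul_assoc]

/-- for positive integers `μ ≤ m`, the CDF of the κ-μ shadowed
distribution is a finite mixture of Erlang (squared Nakagami) CDFs. -/
theorem kappaMuShadowed_cdf_mixture (μ m : ℕ) (hμ : 0 < μ) (hm : 0 < m)
    (hμm : μ ≤ m) (κ γbar : ℝ) (hκ : 0 < κ) (hγ : 0 < γbar)
    (Ωc : ℝ) (hΩc : Ωc = ((μ : ℝ) * κ + m) * γbar / ((m : ℝ) * μ * (1 + κ)))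
    (γ : ℝ) (hγ0 : 0 ≤ γ) :
    ∫ x in (0:ℝ)..γ, kappaMuShadowedPDF κ (μ : ℝ) (m : ℝ) γbar x
      = 1 - ∑ i ∈ Finset.range (m - μ + 1),
            (Nat.choose (m - μ) i : ℝ)
              * ((m : ℝ) / ((μ : ℝ) * κ + m)) ^ i
              * ((μ : ℝ) * κ / ((μ : ℝ) * κ + m)) ^ (m - μ - i)
              * Real.exp (-γ / Ωc)
              * ∑ r ∈ Finset.range (m - i), (γ / Ωc) ^ r / (Nat.factorial r : ℝ) :=
  kappaMuShadowed_cdf_mixture_general μ m hμ hμm κ γbar hκ hγ Ωc hΩc γ hγ0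
end
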